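/- Generalized ties pairwise commute: for every n ≥ 2 and all indices 1 ≤ i < j ≤ n and 1 ≤ k < l ≤ n, the equality η_{i,j} η_{k,l} = η_{k,l} η_{i,j} holds in the tied braid monoid TM_n. -/

import Mathlib

/-!
The tied braid monoid `TM n` (n ≥ 2), presented by generators
σ_1,…,σ_{n−1}, σ_1⁻¹,…,σ_{n−1}⁻¹, η_1,…,η_{n−1} subject to the relations:
σ_i σ_i⁻¹ = σ_i⁻¹ σ_i = 1; σ_i σ_{i+1} σ_i = σ_{i+1} σ_i σ_{i+1};
σ_i σ_j = σ_j σ_i for |i−j| ≥ 2; η_i η_j = η_j η_i for all i, j;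
η_i σ_i = σ_i η_i; η_i σ_j = σ_j η_i for |i−j| ≥ 2;
η_i σ_j σ_i^ε = σ_j σ_i^ε η_j for |i−j| = 1, ε = ±1;
η_i η_j σ_i = η_j σ_i η_j = σ_i η_i η_j for |i−j| = 1; η_i² = η_i.
-/

/-- Generators of the tied braid monoid: σ_i, σ_i⁻¹ and η_i for 1 ≤ i ≤ n−1. -/
inductive TMGen (n : ℕ) : Type
  | sig (i : ℕ) (h : 1 ≤ i ∧ i ≤ n - 1) : TMGen n
  | sigInv (i : ℕ) (h : 1 ≤ i ∧ i ≤ n - 1) : TMGen n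
  | eta (i : ℕ) (h : 1 ≤ i ∧ i ≤ n - 1) : TMGen n

/-- The word σ_i in the free monoid on the generators. -/
def wS (n i : ℕ) : FreeMonoid (TMGen n) :=
  if h : 1 ≤ i ∧ i ≤ n - 1 then FreeMonoid.of (TMGen.sig i h) else 1

/-- The word σ_i⁻¹ in the free monoid on the generators. -/
def wSI (n i : ℕ) : FreeMonoid (TMGen n) :=
  if h : 1 ≤ i ∧ i ≤ n - 1 then FreeMonoid.of (TMGen.sigInv i h) else 1

/-- The word η_i in the free monoid on the generators. -/
def wE (n i : ℕ) : FreeMonoid (TMGen n) :=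
  if h : 1 ≤ i ∧ i ≤ n - 1 then FreeMonoid.of (TMGen.eta i h) else 1

/-- The defining relations of the tied braid monoid `TM n`. -/
inductive TMRel (n : ℕ) : FreeMonoid (TMGen n) → FreeMonoid (TMGen n) → Prop
  | inv_right (i : ℕ) (h : 1 ≤ i ∧ i ≤ n - 1) :
      TMRel n (wS n i * wSI n i) 1
  | inv_left (i : ℕ) (h : 1 ≤ i ∧ i ≤ n - 1) :
      TMRel n (wSI n i * wS n i) 1
  | braid (i : ℕ) (h : 1 ≤ i ∧ i + 1 ≤ n - 1) :
      TMRel n (wS n i * wS n (i+1) * wS n i) (wS n (i+1) * wS n i * wS n (i+1))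
  | sig_comm (i j : ℕ) (hi : 1 ≤ i ∧ i ≤ n - 1) (hj : 1 ≤ j ∧ j ≤ n - 1)
      (hij : i + 2 ≤ j ∨ j + 2 ≤ i) :
      TMRel n (wS n i * wS n j) (wS n j * wS n i)
  | eta_comm (i j : ℕ) (hi : 1 ≤ i ∧ i ≤ n - 1) (hj : 1 ≤ j ∧ j ≤ n - 1) :
      TMRel n (wE n i * wE n j) (wE n j * wE n i)
  | eta_sig (i : ℕ) (h : 1 ≤ i ∧ i ≤ n - 1) :
      TMRel n (wE n i * wS n i) (wS n i * wE n i)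
  | eta_sig_far (i j : ℕ) (hi : 1 ≤ i ∧ i ≤ n - 1) (hj : 1 ≤ j ∧ j ≤ n - 1)
      (hij : i + 2 ≤ j ∨ j + 2 ≤ i) :
      TMRel n (wE n i * wS n j) (wS n j * wE n i)
  | eta_slide_pos (i j : ℕ) (hi : 1 ≤ i ∧ i ≤ n - 1) (hj : 1 ≤ j ∧ j ≤ n - 1)
      (hij : j = i + 1 ∨ i = j + 1) :
      TMRel n (wE n i * wS n j * wS n i) (wS n j * wS n i * wE n j)
  | eta_slide_neg (i j : ℕ) (hi : 1 ≤ i ∧ i ≤ n - 1) (hj : 1 ≤ j ∧ j ≤ n - 1)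
      (hij : j = i + 1 ∨ i = j + 1) :
      TMRel n (wE n i * wS n j * wSI n i) (wS n j * wSI n i * wE n j)
  | eta_eta_sig₁ (i j : ℕ) (hi : 1 ≤ i ∧ i ≤ n - 1) (hj : 1 ≤ j ∧ j ≤ n - 1)
      (hij : j = i + 1 ∨ i = j + 1) :
      TMRel n (wE n i * wE n j * wS n i) (wE n j * wS n i * wE n j)
  | eta_eta_sig₂ (i j : ℕ) (hi : 1 ≤ i ∧ i ≤ n - 1) (hj : 1 ≤ j ∧ j ≤ n - 1)
      (hij : j = i + 1 ∨ i = j + 1) :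
      TMRel n (wE n j * wS n i * wE n j) (wS n i * wE n i * wE n j)
  | eta_idem (i : ℕ) (h : 1 ≤ i ∧ i ≤ n - 1) :
      TMRel n (wE n i * wE n i) (wE n i)

/-- The tied braid monoid `TM n`: the quotient of the free monoid on the
generators by the congruence generated by the defining relations. -/
def TM (n : ℕ) := (conGen (TMRel n)).Quotient

instance (n : ℕ) : Monoid (TM n) :=
  inferInstanceAs (Monoid ((conGen (TMRel n)).Quotient))

/-- The generator σ_i of `TM n` (defined for 1 ≤ i ≤ n−1; junk value 1 otherwise). -/
def TM.s (n i : ℕ) : TM n := (conGen (TMRel n)).mk' (wS n i)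

/-- The generator σ_i⁻¹ of `TM n` (defined for 1 ≤ i ≤ n−1; junk value 1 otherwise). -/
def TM.sInv (n i : ℕ) : TM n := (conGen (TMRel n)).mk' (wSI n i)

/-- The generator η_i of `TM n` (defined for 1 ≤ i ≤ n−1; junk value 1 otherwise). -/
def TM.e (n i : ℕ) : TM n := (conGen (TMRel n)).mk' (wE n i)

/-- The generalized tie η_{i,j} = σ_i σ_{i+1} ⋯ σ_{j−2} η_{j−1} σ_{j−2}⁻¹ ⋯ σ_{i+1}⁻¹ σ_i⁻¹,
for 1 ≤ i < j ≤ n (in particular η_{i,i+1} = η_i). -/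
def TM.genTie (n i j : ℕ) : TM n :=
  (((List.range' i (j - 1 - i)).map (TM.s n)).prod) * TM.e n (j - 1) *
    (((List.range' i (j - 1 - i)).reverse.map (TM.sInv n)).prod)

/-!
Conjugation by σ_k acts on generalized ties through the transposition τ = (k k+1) of their end
points: σ_k η_{a,b} σ_k⁻¹ = η_{τa,τb}. Since σ_k is a unit, this action preserves commutation.
Conjugating by σ_i shortens the first tie η_{i,j} until it is some η_m. Then conjugating by σ_c
or by σ_{d-1} shortens the second tie η_{c,d} while η_m stays an adjacent tie, except in the
nested position η_{c+1}, η_{c,c+3}, which two conjugations turn into η_{c+2}, η_c. Everything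
thus reduces to the defining relation η_i η_j = η_j η_i.
-/

lemma Commute.units_conj {M : Type*} [Monoid M] {u : Mˣ} {x y x' y' : M}
    (h : Commute x y) (hx : SemiconjBy (↑u) x x') (hy : SemiconjBy (↑u) y y') :
    Commute x' y' := by
  have key : ↑u * (x * y) = ↑u * (y * x) := by rw [h.eq]
  rw [(hx.mul_right hy).eq, (hy.mul_right hx).eq] at key
  exact u.mul_left_inj.mp key

lemma SemiconjBy.units_mul {M : Type*} [Monoid M] {u v : Mˣ} {x y z : M}
    (hu : SemiconjBy (↑u) y z) (hv : SemiconjBy (↑v) x y) : SemiconjBy ↑(u * v) x z := by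
  rw [Units.val_mul]
  exact hu.mul_left hv

namespace TM

variable {n : ℕ}

def mk (n : ℕ) : FreeMonoid (TMGen n) →* TM n := (conGen (TMRel n)).mk'

lemma mk_eq_of_rel {x y : FreeMonoid (TMGen n)} (h : TMRel n x y) : mk n x = mk n y :=
  (Con.eq _).mpr (ConGen.Rel.of x y h)

@[simp] lemma mk_wS (i : ℕ) : mk n (wS n i) = s n i := rfl

@[simp] lemma mk_wSI (i : ℕ) : mk n (wSI n i) = sInv n i := rfl

@[simp] lemma mk_wE (i : ℕ) : mk n (wE n i) = e n i := rfl

lemma s_of_not {i : ℕ} (h : ¬(1 ≤ i ∧ i ≤ n - 1)) : s n i = 1 := by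
  rw [← mk_wS, wS, dif_neg h, map_one]

lemma sInv_of_not {i : ℕ} (h : ¬(1 ≤ i ∧ i ≤ n - 1)) : sInv n i = 1 := by
  rw [← mk_wSI, wSI, dif_neg h, map_one]

lemma e_of_not {i : ℕ} (h : ¬(1 ≤ i ∧ i ≤ n - 1)) : e n i = 1 := by
  rw [← mk_wE, wE, dif_neg h, map_one]

lemma s_mul_sInv (i : ℕ) : s n i * sInv n i = 1 := by
  by_cases h : 1 ≤ i ∧ i ≤ n - 1
  · simpa only [map_mul, map_one, mk_wS, mk_wSI] using mk_eq_of_rel (TMRel.inv_right i h)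
  · rw [s_of_not h, sInv_of_not h, one_mul]

lemma sInv_mul_s (i : ℕ) : sInv n i * s n i = 1 := by
  by_cases h : 1 ≤ i ∧ i ≤ n - 1
  · simpa only [map_mul, map_one, mk_wS, mk_wSI] using mk_eq_of_rel (TMRel.inv_left i h)
  · rw [s_of_not h, sInv_of_not h, one_mul]

def sigma (n i : ℕ) : (TM n)ˣ := ⟨s n i, sInv n i, s_mul_sInv i, sInv_mul_s i⟩

@[simp] lemma val_sigma (i : ℕ) : (sigma n i : TM n) = s n i := rfl

@[simp] lemma val_sigma_inv (i : ℕ) : ((sigma n i)⁻¹ : (TM n)ˣ) = sInv n i := rfl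

lemma sigma_braid {i : ℕ} (hi : 1 ≤ i) (hin : i + 2 ≤ n) :
    sigma n i * sigma n (i + 1) * sigma n i = sigma n (i + 1) * sigma n i * sigma n (i + 1) := by
  ext
  simpa only [map_mul, mk_wS, Units.val_mul, val_sigma]
    using mk_eq_of_rel (TMRel.braid (n := n) i ⟨hi, by omega⟩)

lemma commute_sigma_sigma {i j : ℕ} (hij : i + 2 ≤ j ∨ j + 2 ≤ i) :
    Commute (sigma n i) (sigma n j) := by
  refine Units.ext ?_
  by_cases hi : 1 ≤ i ∧ i ≤ n - 1
  · by_cases hj : 1 ≤ j ∧ j ≤ n - 1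
    · simpa only [map_mul, mk_wS, Units.val_mul, val_sigma]
        using mk_eq_of_rel (TMRel.sig_comm i j hi hj hij)
    · simp [s_of_not hj]
  · simp [s_of_not hi]

lemma commute_e_e (i j : ℕ) : Commute (e n i) (e n j) := by
  by_cases hi : 1 ≤ i ∧ i ≤ n - 1
  · by_cases hj : 1 ≤ j ∧ j ≤ n - 1
    · simpa only [map_mul, mk_wE, Commute, SemiconjBy]
        using mk_eq_of_rel (TMRel.eta_comm i j hi hj)
    · simp [e_of_not hj]
  · simp [e_of_not hi]

lemma commute_sigma_e (i : ℕ) : Commute (sigma n i : TM n) (e n i) := by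
  by_cases h : 1 ≤ i ∧ i ≤ n - 1
  · simpa only [map_mul, mk_wS, mk_wE, val_sigma, Commute, SemiconjBy, eq_comm]
      using mk_eq_of_rel (TMRel.eta_sig i h)
  · simp [e_of_not h]

lemma commute_sigma_e_of_far {i j : ℕ} (hij : i + 2 ≤ j ∨ j + 2 ≤ i) :
    Commute (sigma n j : TM n) (e n i) := by
  by_cases hi : 1 ≤ i ∧ i ≤ n - 1
  · by_cases hj : 1 ≤ j ∧ j ≤ n - 1
    · simpa only [map_mul, mk_wS, mk_wE, val_sigma, Commute, SemiconjBy, eq_comm]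
        using mk_eq_of_rel (TMRel.eta_sig_far i j hi hj hij)
    · simp [s_of_not hj]
  · simp [e_of_not hi]

lemma semiconjBy_sigma_mul_sigma {i j : ℕ} (hi : 1 ≤ i ∧ i ≤ n - 1) (hj : 1 ≤ j ∧ j ≤ n - 1)
    (hij : j = i + 1 ∨ i = j + 1) : SemiconjBy ↑(sigma n j * sigma n i) (e n j) (e n i) := by
  simpa only [map_mul, mk_wS, mk_wE, Units.val_mul, val_sigma, SemiconjBy, eq_comm, mul_assoc]
    using mk_eq_of_rel (TMRel.eta_slide_pos i j hi hj hij)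

lemma semiconjBy_sigma_mul_sigma_inv {i j : ℕ} (hi : 1 ≤ i ∧ i ≤ n - 1)
    (hj : 1 ≤ j ∧ j ≤ n - 1) (hij : j = i + 1 ∨ i = j + 1) :
    SemiconjBy ↑(sigma n j * (sigma n i)⁻¹) (e n j) (e n i) := by
  simpa only [map_mul, mk_wS, mk_wSI, mk_wE, Units.val_mul, val_sigma, val_sigma_inv,
    SemiconjBy, eq_comm, mul_assoc] using mk_eq_of_rel (TMRel.eta_slide_neg i j hi hj hij)

lemma commute_sigma_sq_e {i j : ℕ} (hi : 1 ≤ i ∧ i ≤ n - 1) (hj : 1 ≤ j ∧ j ≤ n - 1)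
    (hij : j = i + 1 ∨ i = j + 1) : Commute ↑(sigma n j ^ 2) (e n i) := by
  have h := (semiconjBy_sigma_mul_sigma_inv hi hj hij).units_mul
    (semiconjBy_sigma_mul_sigma hj hi hij.symm)
  rwa [show sigma n j * (sigma n i)⁻¹ * (sigma n i * sigma n j) = sigma n j ^ 2 by
    rw [sq]; group] at h

@[simp] lemma genTie_succ (a : ℕ) : genTie n a (a + 1) = e n a := by
  simp [genTie]

lemma genTie_eq_conj {a b : ℕ} (h : a + 1 < b) :
    genTie n a b = sigma n a * genTie n (a + 1) b * ↑(sigma n a)⁻¹ := by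
  rw [genTie, genTie, show b - 1 - a = b - 1 - (a + 1) + 1 by omega, List.range'_succ]
  simp only [List.map_cons, List.prod_cons, List.reverse_cons, List.map_append,
    List.prod_append, List.map_nil, List.prod_nil, mul_one, val_sigma, val_sigma_inv, mul_assoc]

lemma semiconjBy_sigma_genTie_left_succ {a b : ℕ} (h : a + 1 < b) :
    SemiconjBy ↑(sigma n a) (genTie n (a + 1) b) (genTie n a b) := by
  rw [genTie_eq_conj h]
  exact Units.mk_semiconjBy _ _

lemma semiconjBy_genTie_of_succ {c : TM n} {a b b' : ℕ} (hb : a + 1 < b) (hb' : a + 1 < b')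
    (hc : Commute c (sigma n a)) (h : SemiconjBy c (genTie n (a + 1) b) (genTie n (a + 1) b')) :
    SemiconjBy c (genTie n a b) (genTie n a b') := by
  rw [genTie_eq_conj hb, genTie_eq_conj hb']
  exact (SemiconjBy.mul_right hc h).mul_right hc.units_inv_right

lemma semiconjBy_sigma_genTie_right {a m : ℕ} (ha : 1 ≤ a) (ham : a < m) (hm : m + 1 ≤ n) :
    SemiconjBy ↑(sigma n m) (genTie n a m) (genTie n a (m + 1)) := by
  induction hd : m - a generalizing a with
  | zero => omega
  | succ d ih =>
    rcases (by omega : m = a + 1 ∨ a + 1 < m) with rfl | ham'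
    · have hconj := semiconjBy_sigma_genTie_left_succ (n := n) (a := a) (b := a + 2) (by omega)
      rw [genTie_succ] at hconj
      have hsq := (commute_sigma_sq_e (n := n) (i := a + 1) (j := a) ⟨by omega, by omega⟩
        ⟨ha, by omega⟩ (Or.inr rfl)).units_inv_symm_left
      have hslide := semiconjBy_sigma_mul_sigma (n := n) (i := a + 1) (j := a)
        ⟨by omega, by omega⟩ ⟨ha, by omega⟩ (Or.inr rfl)
      have h := hconj.units_mul (hsq.units_mul hslide)
      rw [show sigma n a * ((sigma n a ^ 2)⁻¹ * (sigma n a * sigma n (a + 1)))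
        = sigma n (a + 1) by group] at h
      simpa only [genTie_succ] using h
    · exact semiconjBy_genTie_of_succ ham' (by omega)
        (commute_sigma_sigma (Or.inr (by omega))).units_val (ih (by omega) (by omega) (by omega))

lemma semiconjBy_sigma_genTie_right_succ {a m : ℕ} (ha : 1 ≤ a) (ham : a < m)
    (hm : m + 1 ≤ n) : SemiconjBy ↑(sigma n m) (genTie n a (m + 1)) (genTie n a m) := by
  induction hd : m - a generalizing a with
  | zero => omega
  | succ d ih =>
    rcases (by omega : m = a + 1 ∨ a + 1 < m) with rfl | ham'
    · have hconj := (semiconjBy_sigma_genTie_left_succ (n := n) (a := a) (b := a + 2)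
        (by omega)).units_inv_symm_left
      have hslide := semiconjBy_sigma_mul_sigma (n := n) (i := a) (j := a + 1)
        ⟨ha, by omega⟩ ⟨by omega, by omega⟩ (Or.inl rfl)
      rw [genTie_succ] at hconj
      have h := hslide.units_mul hconj
      rw [show sigma n (a + 1) * sigma n a * (sigma n a)⁻¹ = sigma n (a + 1) by group] at h
      simpa only [genTie_succ] using h
    · exact semiconjBy_genTie_of_succ (by omega) ham'
        (commute_sigma_sigma (Or.inr (by omega))).units_val (ih (by omega) (by omega) (by omega))

lemma commute_sigma_sq_genTie {a b : ℕ} (ha : 1 ≤ a) (hab : a + 1 < b) (hb : b ≤ n) :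
    Commute ↑(sigma n a ^ 2) (genTie n (a + 1) b) := by
  induction b, hab using Nat.le_induction with
  | base =>
    rw [genTie_succ]
    exact commute_sigma_sq_e ⟨by omega, by omega⟩ ⟨ha, by omega⟩ (Or.inr rfl)
  | succ b hab ih =>
    exact (ih (by omega)).units_conj
      ((commute_sigma_sigma (Or.inr hab)).pow_right 2).units_val
      (semiconjBy_sigma_genTie_right (by omega) (by omega) hb)

lemma semiconjBy_sigma_genTie_left {a b : ℕ} (ha : 1 ≤ a) (hab : a + 1 < b) (hb : b ≤ n) :
    SemiconjBy ↑(sigma n a) (genTie n a b) (genTie n (a + 1) b) := by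
  have h := (commute_sigma_sq_genTie ha hab hb).units_mul
    (semiconjBy_sigma_genTie_left_succ hab).units_inv_symm_left
  rwa [show sigma n a ^ 2 * (sigma n a)⁻¹ = sigma n a by group] at h

lemma commute_sigma_genTie {a b m : ℕ} (ha : 1 ≤ a) (hab : a < b) (hb : b ≤ n)
    (hm : m + 2 ≤ a ∨ a + 1 ≤ m ∧ m + 2 ≤ b ∨ b + 1 ≤ m) :
    Commute ↑(sigma n m) (genTie n a b) := by
  induction hd : b - a using Nat.strong_induction_on generalizing a m with
  | _ d ih =>
    rcases (by omega : b = a + 1 ∨ m = a + 1 ∨ (a + 1 < b ∧ (m + 2 ≤ a ∨ a + 2 ≤ m))) with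
      rfl | rfl | ⟨hab', hfar⟩
    · simpa only [genTie_succ] using commute_sigma_e_of_far (n := n) (by omega)
    · have hG : Commute ↑(sigma n a) (genTie n (a + 2) b) :=
        ih (b - (a + 2)) (by omega) (by omega) (by omega) (by omega) rfl
      have hbraid : SemiconjBy (↑(sigma n a * sigma n (a + 1)) : TM n) ↑(sigma n a)
          ↑(sigma n (a + 1)) := by
        rw [SemiconjBy, ← Units.val_mul, ← Units.val_mul, sigma_braid ha (by omega), mul_assoc]
      exact hG.units_conj hbraid ((semiconjBy_sigma_genTie_left_succ (by omega)).units_mul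
        (semiconjBy_sigma_genTie_left_succ (by omega)))
    · exact semiconjBy_genTie_of_succ hab' hab' (commute_sigma_sigma (by omega)).units_val
        (ih (b - (a + 1)) (by omega) (by omega) (by omega) (by omega) rfl)

def tie (n a b : ℕ) : TM n := genTie n (min a b) (max a b)

lemma tie_comm (a b : ℕ) : tie n a b = tie n b a := by
  rw [tie, tie, min_comm, max_comm]

lemma tie_of_lt {a b : ℕ} (h : a < b) : tie n a b = genTie n a b := by
  rw [tie, min_eq_left h.le, max_eq_right h.le]

lemma tie_swap_succ {k m : ℕ} (hkm : k + 1 ≠ m ∧ k ≠ m + 1) :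
    tie n (Equiv.swap k (k + 1) m) (Equiv.swap k (k + 1) (m + 1)) = tie n m (m + 1) := by
  rcases eq_or_ne m k with rfl | hmk
  · rw [Equiv.swap_apply_left, Equiv.swap_apply_right, tie_comm]
  · rw [Equiv.swap_apply_of_ne_of_ne hmk (by omega),
      Equiv.swap_apply_of_ne_of_ne (by omega) (by omega)]

lemma semiconjBy_sigma_genTie {a b k : ℕ} (ha : 1 ≤ a) (hab : a < b) (hb : b ≤ n)
    (hkn : k + 1 ≤ n) : SemiconjBy ↑(sigma n k) (genTie n a b)
      (tie n (Equiv.swap k (k + 1) a) (Equiv.swap k (k + 1) b)) := by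
  rcases (by omega : k + 1 = a ∨ (k = a ∧ b = a + 1) ∨ (k = a ∧ a + 1 < b) ∨ (a < k ∧ k + 1 = b) ∨
      k = b ∨ (k + 2 ≤ a ∨ a + 1 ≤ k ∧ k + 2 ≤ b ∨ b + 1 ≤ k)) with
    rfl | ⟨rfl, rfl⟩ | ⟨rfl, hab'⟩ | ⟨hka, rfl⟩ | rfl | hfar
  · rw [Equiv.swap_apply_right, Equiv.swap_apply_of_ne_of_ne (by omega) (by omega),
      tie_of_lt (by omega)]
    exact semiconjBy_sigma_genTie_left_succ hab
  · rw [Equiv.swap_apply_left, Equiv.swap_apply_right, tie_comm, tie_of_lt (by omega),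
      genTie_succ]
    exact commute_sigma_e k
  · rw [Equiv.swap_apply_left, Equiv.swap_apply_of_ne_of_ne (by omega) (by omega),
      tie_of_lt hab']
    exact semiconjBy_sigma_genTie_left ha hab' hb
  · rw [Equiv.swap_apply_of_ne_of_ne (by omega) (by omega), Equiv.swap_apply_right,
      tie_of_lt hka]
    exact semiconjBy_sigma_genTie_right_succ ha hka hkn
  · rw [Equiv.swap_apply_of_ne_of_ne (by omega) (by omega), Equiv.swap_apply_left,
      tie_of_lt (by omega)]
    exact semiconjBy_sigma_genTie_right ha hab hkn
  · rw [Equiv.swap_apply_of_ne_of_ne (by omega) (by omega),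
      Equiv.swap_apply_of_ne_of_ne (by omega) (by omega), tie_of_lt hab]
    exact commute_sigma_genTie ha hab hb hfar

lemma semiconjBy_sigma_tie {a b k : ℕ} (hab : a ≠ b ∧ 1 ≤ min a b ∧ max a b ≤ n)
    (hkn : k + 1 ≤ n) : SemiconjBy ↑(sigma n k) (tie n a b)
      (tie n (Equiv.swap k (k + 1) a) (Equiv.swap k (k + 1) b)) := by
  rcases hab.1.lt_or_gt with h | h
  · rw [tie_of_lt h]
    exact semiconjBy_sigma_genTie (by omega) h (by omega) hkn
  · rw [tie_comm, tie_of_lt h, tie_comm]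
    exact semiconjBy_sigma_genTie (by omega) h (by omega) hkn

lemma commute_tie_of_commute_swap {a b c d k : ℕ} (hab : a ≠ b ∧ 1 ≤ min a b ∧ max a b ≤ n)
    (hcd : c ≠ d ∧ 1 ≤ min c d ∧ max c d ≤ n) (hkn : k + 1 ≤ n)
    (h : Commute (tie n (Equiv.swap k (k + 1) a) (Equiv.swap k (k + 1) b))
      (tie n (Equiv.swap k (k + 1) c) (Equiv.swap k (k + 1) d))) :
    Commute (tie n a b) (tie n c d) :=
  h.units_conj (semiconjBy_sigma_tie hab hkn).units_inv_symm_left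
    (semiconjBy_sigma_tie hcd hkn).units_inv_symm_left

lemma commute_e_genTie_nested {c : ℕ} (hc : 1 ≤ c) (hcn : c + 3 ≤ n) :
    Commute (e n (c + 1)) (genTie n c (c + 3)) := by
  have hadj : Commute (genTie n (c + 2) (c + 3)) (genTie n c (c + 1)) := by
    simpa only [genTie_succ] using commute_e_e (n := n) (c + 2) c
  have hcross : Commute (genTie n (c + 1) (c + 3)) (genTie n c (c + 2)) :=
    hadj.units_conj
      (semiconjBy_sigma_genTie_left (by omega) (by omega) hcn).units_inv_symm_left
      (semiconjBy_sigma_genTie_right_succ hc (by omega) (by omega)).units_inv_symm_left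
  simpa only [genTie_succ] using hcross.units_conj
    (semiconjBy_sigma_genTie_right (a := c + 1) (by omega) (by omega) hcn).units_inv_symm_left
    (semiconjBy_sigma_genTie_right_succ hc (by omega) hcn).units_inv_symm_left

lemma commute_e_tie {m c d : ℕ} (hm : 1 ≤ m) (hmn : m + 1 ≤ n) (hc : 1 ≤ c) (hcd : c < d)
    (hd : d ≤ n) : Commute (tie n m (m + 1)) (tie n c d) := by
  induction hl : d - c generalizing c d with
  | zero => omega
  | succ l ih =>
    rcases (by omega : d = c + 1 ∨ (m = c + 1 ∧ d = c + 3) ∨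
        (c + 1 < d ∧ c + 1 ≠ m ∧ c ≠ m + 1) ∨ (c + 1 < d ∧ d ≠ m ∧ d ≠ m + 2)) with
      rfl | ⟨rfl, rfl⟩ | ⟨hcd', hfix⟩ | ⟨hcd', hfix⟩
    · rw [tie_of_lt (by omega), tie_of_lt hcd, genTie_succ, genTie_succ]
      exact commute_e_e _ _
    · rw [tie_of_lt (by omega), tie_of_lt hcd, genTie_succ]
      exact commute_e_genTie_nested hc hd
    · refine commute_tie_of_commute_swap (k := c) (by omega) (by omega) (by omega) ?_
      rw [tie_swap_succ hfix, Equiv.swap_apply_left,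
        Equiv.swap_apply_of_ne_of_ne (by omega) (by omega)]
      exact ih (c := c + 1) (d := d) (by omega) hcd' hd (by omega)
    · obtain ⟨d, rfl⟩ : ∃ d', d = d' + 1 := ⟨d - 1, by omega⟩
      refine commute_tie_of_commute_swap (k := d) (by omega) (by omega) (by omega) ?_
      rw [tie_swap_succ (by omega), Equiv.swap_apply_of_ne_of_ne (by omega) (by omega),
        Equiv.swap_apply_right]
      exact ih (c := c) (d := d) hc (by omega) (by omega) (by omega)

lemma commute_tie_tie {i j k l : ℕ} (hi : 1 ≤ i) (hij : i < j) (hj : j ≤ n)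
    (hkl : k ≠ l ∧ 1 ≤ min k l ∧ max k l ≤ n) : Commute (tie n i j) (tie n k l) := by
  induction hd : j - i generalizing i k l with
  | zero => omega
  | succ d ih =>
    rcases (by omega : j = i + 1 ∨ i + 1 < j) with rfl | hij'
    · rcases hkl.1.lt_or_gt with h | h
      · exact commute_e_tie hi hj (by omega) h (by omega)
      · rw [tie_comm k l]
        exact commute_e_tie hi hj (by omega) h (by omega)
    · refine commute_tie_of_commute_swap (k := i) (by omega) hkl (by omega) ?_
      rw [Equiv.swap_apply_left, Equiv.swap_apply_of_ne_of_ne (by omega) (by omega)]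
      exact ih (i := i + 1) (by omega) hij'
        (by simp only [Equiv.swap_apply_def]; split_ifs <;> omega) (by omega)

end TM

theorem tm_genTie_comm_general (n : ℕ) (i j k l : ℕ)
    (hi : 1 ≤ i) (hij : i < j) (hj : j ≤ n)
    (hk : 1 ≤ k) (hkl : k < l) (hl : l ≤ n) :
    TM.genTie n i j * TM.genTie n k l = TM.genTie n k l * TM.genTie n i j := by
  rw [← TM.tie_of_lt hij, ← TM.tie_of_lt hkl]
  exact TM.commute_tie_tie hi hij hj ⟨hkl.ne, by omega, by omega⟩

/-- **Generalized ties pairwise commute**: for every n ≥ 2 and all indices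
1 ≤ i < j ≤ n and 1 ≤ k < l ≤ n, η_{i,j} η_{k,l} = η_{k,l} η_{i,j} in `TM n`. -/
theorem tm_genTie_comm (n : ℕ) (hn : 2 ≤ n) (i j k l : ℕ)
    (hi : 1 ≤ i) (hij : i < j) (hj : j ≤ n)
    (hk : 1 ≤ k) (hkl : k < l) (hl : l ≤ n) :
    TM.genTie n i j * TM.genTie n k l = TM.genTie n k l * TM.genTie n i j :=
  tm_genTie_comm_general n i j k l hi hij hj hk hkl hl
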